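/- arXiv:1410.6466 — 3 statements merged into one kernel-verified Lean document; each statement's English description precedes it below -/
import Mathlib

section
/- Let A and B be symmetric real V×V matrices with A positive semidefinite. Then for every index i, the difference of i-th largest singular values satisfies |σ_i(B) − σ_i(A)| ≤ max_k |λ_k(B) − λ_k(A)|, where λ_k denotes the k-th largest eigenvalue. -/
/-!
For a symmetric `B` the eigenvalues of `BᵀB = B²` are the squares of those of `B`, so the
singular values of `B` are the decreasing rearrangement of `|λ_k(B)|`; for `A ⪰ 0` they are
simply `λ_k(A)`. Decreasing rearrangement is monotone and commutes with adding a constant,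
hence is 1-Lipschitz for the sup norm, and `||λ_k(B)| - λ_k(A)| ≤ |λ_k(B) - λ_k(A)|`
because `λ_k(A) ≥ 0`.
-/

open Matrix

/-- The decreasing rearrangement of a finite tuple of reals:
`descSort f i` is the `i`-th largest value among `f 0, …, f (n-1)` (0-indexed). -/
noncomputable def descSort {n : ℕ} (f : Fin n → ℝ) : Fin n → ℝ :=
  fun i => f (Tuple.sort f (Fin.rev i))

/-- `svalM M i` is the `i`-th largest singular value (0-indexed) of a real matrix `M`,
defined as the square root of the `i`-th largest eigenvalue of `Mᵀ M`. -/
noncomputable def svalM {m n : ℕ} (M : Matrix (Fin m) (Fin n) ℝ) : Fin n → ℝ :=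
  fun i => Real.sqrt (descSort (Matrix.isHermitian_conjTranspose_mul_self M).eigenvalues i)

/-- `eigDesc hM i` is the `i`-th largest eigenvalue (0-indexed) of a symmetric real matrix. -/
noncomputable def eigDesc {n : ℕ} {M : Matrix (Fin n) (Fin n) ℝ} (hM : M.IsHermitian) :
    Fin n → ℝ := descSort hM.eigenvalues

section DescSort

open Finset

variable {n : ℕ}

lemma descSort_eq_comp_perm (f : Fin n → ℝ) :
    descSort f = f ∘ (Fin.revPerm.trans (Tuple.sort f)) := rfl

lemma antitone_descSort (f : Fin n → ℝ) : Antitone (descSort f) :=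
  fun _ _ hij => Tuple.monotone_sort f (Fin.rev_le_rev.mpr hij)

lemma univ_val_map_descSort (f : Fin n → ℝ) : univ.val.map (descSort f) = univ.val.map f := by
  rw [descSort_eq_comp_perm, ← Multiset.map_map, Multiset.map_univ_val_equiv]

lemma descSort_eq_of_antitone {f g : Fin n → ℝ} (hg : Antitone g)
    (h : univ.val.map g = univ.val.map f) : descSort f = g := by
  have hperm : (List.ofFn (descSort f)).Perm (List.ofFn g) := by
    rw [← Multiset.coe_eq_coe, ← Fin.univ_val_map, ← Fin.univ_val_map, univ_val_map_descSort,
      h]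
  exact List.ofFn_injective <|
    hperm.eq_of_sortedGE (antitone_descSort f).sortedGE_ofFn hg.sortedGE_ofFn

lemma descSort_congr {f g : Fin n → ℝ} (h : univ.val.map f = univ.val.map g) :
    descSort f = descSort g :=
  descSort_eq_of_antitone (antitone_descSort g) (by rw [univ_val_map_descSort, h])

lemma descSort_comp_perm (f : Fin n → ℝ) (σ : Equiv.Perm (Fin n)) :
    descSort (f ∘ σ) = descSort f :=
  descSort_congr (by rw [← Multiset.map_map, Multiset.map_univ_val_equiv])

lemma Antitone.descSort_eq {f : Fin n → ℝ} (hf : Antitone f) : descSort f = f :=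
  descSort_eq_of_antitone hf rfl

lemma Monotone.descSort_comp {φ : ℝ → ℝ} (hφ : Monotone φ) (f : Fin n → ℝ) :
    descSort (φ ∘ f) = φ ∘ descSort f :=
  descSort_eq_of_antitone (hφ.comp_antitone (antitone_descSort f)) <| by
    rw [← Multiset.map_map, univ_val_map_descSort, Multiset.map_map]

lemma card_filter_descSort (f : Fin n → ℝ) (p : ℝ → Prop) [DecidablePred p] :
    #{k | p (descSort f k)} = #{k | p (f k)} :=
  card_equiv (Fin.revPerm.trans (Tuple.sort f)) (by simp [descSort_eq_comp_perm])

lemma descSort_mono {f g : Fin n → ℝ} (h : f ≤ g) : descSort f ≤ descSort g := by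
  intro i
  -- `v ≤ descSort g i` iff more than `i` entries of `g` are `≥ v`.
  have hf : i < #{k | descSort f i ≤ f k} := by
    rw [← card_filter_descSort, Tuple.lt_card_ge_iff_apply_ge_of_antitone (antitone_descSort f)]
  have hfg : #{k | descSort f i ≤ f k} ≤ #{k | descSort f i ≤ g k} :=
    card_le_card (monotone_filter_right _ fun k _ hk => hk.trans (h k))
  rw [← Tuple.lt_card_ge_iff_apply_ge_of_antitone (antitone_descSort g), card_filter_descSort]
  exact hf.trans_le hfg

lemma descSort_le_descSort_add {f g : Fin n → ℝ} {c : ℝ} (h : ∀ k, f k ≤ g k + c)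
    (i : Fin n) : descSort f i ≤ descSort g i + c := by
  have := descSort_mono (g := (· + c) ∘ g) h i
  rwa [Monotone.descSort_comp (φ := (· + c)) (fun _ _ hxy => add_le_add_left hxy c)] at this

lemma abs_descSort_sub_descSort_le {f g : Fin n → ℝ} {ε : ℝ} (h : ∀ k, |f k - g k| ≤ ε)
    (i : Fin n) : |descSort f i - descSort g i| ≤ ε := by
  rw [abs_sub_le_iff, sub_le_iff_le_add', sub_le_iff_le_add']
  exact ⟨descSort_le_descSort_add (fun k => sub_le_iff_le_add'.mp (abs_sub_le_iff.mp (h k)).1) i,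
    descSort_le_descSort_add (fun k => sub_le_iff_le_add'.mp (abs_sub_le_iff.mp (h k)).2) i⟩

end DescSort

open Finset Polynomial in
lemma Matrix.IsHermitian.univ_val_map_eigenvalues_conjTranspose_mul_self
    {𝕜 : Type*} [RCLike 𝕜] {n : Type*} [Fintype n] [DecidableEq n] {M : Matrix n n 𝕜}
    (hM : M.IsHermitian) :
    univ.val.map (isHermitian_conjTranspose_mul_self M).eigenvalues
      = univ.val.map (fun k => hM.eigenvalues k ^ 2) := by
  have roots_eq (g : n → ℝ) :
      (∏ k, (X - C (g k : 𝕜))).roots = (univ.val.map g).map ((↑) : ℝ → 𝕜) := by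
    rw [prod_eq_multiset_prod]
    simpa only [Multiset.map_map, Function.comp_def] using
      roots_multiset_prod_X_sub_C ((univ.val.map g).map ((↑) : ℝ → 𝕜))
  have hsq : Mᴴ * M = cfc (· ^ 2 : ℝ → ℝ) M := by
    rw [hM.eq, cfc_pow_id (R := ℝ) M 2 hM.isSelfAdjoint, sq]
  have hcharpoly := (isHermitian_conjTranspose_mul_self M).charpoly_eq.symm.trans
    ((congrArg charpoly hsq).trans (hM.charpoly_cfc_eq _))
  have hroots := congrArg roots hcharpoly
  rw [roots_eq, roots_eq] at hroots
  exact Multiset.map_injective RCLike.ofReal_injective hroots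

lemma Matrix.IsHermitian.svalM_eq_descSort_abs_eigenvalues {n : ℕ}
    {M : Matrix (Fin n) (Fin n) ℝ} (hM : M.IsHermitian) :
    svalM M = descSort (fun k => |hM.eigenvalues k|) := by
  have habs : (fun k => |hM.eigenvalues k|) = Real.sqrt ∘ fun k => hM.eigenvalues k ^ 2 :=
    funext fun k => (Real.sqrt_sq_eq_abs _).symm
  rw [habs, Real.sqrt_monotone.descSort_comp,
    ← descSort_congr hM.univ_val_map_eigenvalues_conjTranspose_mul_self]
  rfl

lemma antitone_eigDesc {n : ℕ} {M : Matrix (Fin n) (Fin n) ℝ} (hM : M.IsHermitian) :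
    Antitone (eigDesc hM) :=
  antitone_descSort _

lemma Matrix.PosSemidef.eigDesc_nonneg {n : ℕ} {A : Matrix (Fin n) (Fin n) ℝ}
    (hA : A.PosSemidef) (k : Fin n) : 0 ≤ eigDesc hA.1 k :=
  hA.eigenvalues_nonneg _

lemma Matrix.PosSemidef.svalM_eq_eigDesc {n : ℕ} {A : Matrix (Fin n) (Fin n) ℝ}
    (hA : A.PosSemidef) : svalM A = eigDesc hA.1 := by
  rw [hA.1.svalM_eq_descSort_abs_eigenvalues, eigDesc]
  exact congrArg descSort (funext fun k => abs_of_nonneg (hA.eigenvalues_nonneg k))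

lemma Matrix.IsHermitian.svalM_eq_descSort_abs_eigDesc {n : ℕ} {M : Matrix (Fin n) (Fin n) ℝ}
    (hM : M.IsHermitian) : svalM M = descSort (fun k => |eigDesc hM k|) := by
  rw [hM.svalM_eq_descSort_abs_eigenvalues]
  exact (descSort_comp_perm (fun k => |hM.eigenvalues k|)
    (Fin.revPerm.trans (Tuple.sort hM.eigenvalues))).symm

/-- For symmetric `A`, `B` with `A` positive semidefinite,
`|σ_i(B) − σ_i(A)| ≤ max_k |λ_k(B) − λ_k(A)|` for every `i`. -/
theorem stmt0 {V : ℕ} (A B : Matrix (Fin V) (Fin V) ℝ)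
    (hA : A.PosSemidef) (hB : B.IsHermitian) :
    ∀ i : Fin V, |svalM B i - svalM A i| ≤
      Finset.univ.sup' ⟨i, Finset.mem_univ i⟩
        (fun k => |eigDesc hB k - eigDesc hA.1 k|) := by
  intro i
  set ε := Finset.univ.sup' ⟨i, Finset.mem_univ i⟩ (fun k => |eigDesc hB k - eigDesc hA.1 k|)
  have hdist (k : Fin V) : |(|eigDesc hB k|) - eigDesc hA.1 k| ≤ ε := calc
    _ = |(|eigDesc hB k|) - (|eigDesc hA.1 k|)| := by
      rw [abs_of_nonneg (hA.eigDesc_nonneg k)]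
    _ ≤ |eigDesc hB k - eigDesc hA.1 k| := abs_abs_sub_abs_le_abs_sub _ _
    _ ≤ ε := Finset.le_sup' (fun k => |eigDesc hB k - eigDesc hA.1 k|) (Finset.mem_univ k)
  have := abs_descSort_sub_descSort_le hdist i
  rwa [(antitone_eigDesc hA.1).descSort_eq,
    ← hB.svalM_eq_descSort_abs_eigDesc, ← hA.svalM_eq_eigDesc] at this
end

section
/- Let U be a chi-square random variable with D degrees of freedom. Then for any x > 0, P(U ≥ D + 2√(Dx) + 2x) ≤ e^{−x} and P(U ≤ D − 2√(Dx)) ≤ e^{−x}. -/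
/-!
Chernoff's bound with the chi-square moment generating function `E e^{tU} = (1 - 2t)^{-D/2}`.
Writing `x = D u²`, the choice `t = u / (1 + 2u)` for the upper tail and `t = -u` for the lower
tail reduces both bounds to the elementary inequalities `log w ≤ sinh (log w) = (w - w⁻¹) / 2`
for `w ≥ 1` and `log (1 + v) ≥ v - v² / 2` for `v ≥ 0`.
-/

open MeasureTheory ProbabilityTheory Real

lemma log_le_sub_inv_div_two {w : ℝ} (hw : 1 ≤ w) : log w ≤ (w - w⁻¹) / 2 := by
  rw [← sinh_log (by positivity)]
  exact self_le_sinh_iff.mpr (log_nonneg hw)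

lemma sub_sq_div_two_le_log_one_add {v : ℝ} (hv : 0 ≤ v) : v - v ^ 2 / 2 ≤ log (1 + v) := by
  refine le_trans ?_ (le_log_one_add_of_nonneg hv)
  rw [le_div_iff₀ (by positivity)]
  nlinarith [pow_nonneg hv 3]

lemma gammaPDF_mul_exp {a r t : ℝ} (hr : 0 < r) (ht : t < r) (y : ℝ) :
    gammaPDF a r y * ENNReal.ofReal (exp (t * y))
      = ENNReal.ofReal ((r / (r - t)) ^ a) * gammaPDF a (r - t) y := by
  have hrt : 0 < r - t := sub_pos.mpr ht
  rcases lt_or_ge y 0 with hy | hy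
  · rw [gammaPDF_of_neg hy, gammaPDF_of_neg hy, zero_mul, mul_zero]
  rw [gammaPDF_of_nonneg hy, gammaPDF_of_nonneg hy,
    ← ENNReal.ofReal_mul' (exp_pos _).le, ← ENNReal.ofReal_mul (by positivity)]
  have hexp : exp (-(r * y)) * exp (t * y) = exp (-((r - t) * y)) := by
    rw [← exp_add]; ring_nf
  have hpow : (r / (r - t)) ^ a * (r - t) ^ a = r ^ a := by
    rw [← mul_rpow (by positivity) hrt.le, div_mul_cancel₀ _ hrt.ne']
  rw [mul_assoc, hexp, ← hpow]
  ring_nf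

lemma lintegral_exp_mul_gammaMeasure {a r t : ℝ} (ha : 0 < a) (hr : 0 < r) (ht : t < r) :
    ∫⁻ y, ENNReal.ofReal (exp (t * y)) ∂gammaMeasure a r
      = ENNReal.ofReal ((r / (r - t)) ^ a) := by
  have hpdf (b : ℝ) : Measurable (gammaPDF a b) := (measurable_gammaPDFReal a b).ennreal_ofReal
  rw [gammaMeasure, lintegral_withDensity_eq_lintegral_mul _ (hpdf r) (by fun_prop)]
  simp only [Pi.mul_apply, gammaPDF_mul_exp hr ht]
  rw [lintegral_const_mul _ (hpdf (r - t)),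
    lintegral_gammaPDF_eq_one ha (sub_pos.mpr ht), mul_one]

lemma chernoff_bound_of_map_eq_gammaMeasure {Ω : Type*} [MeasurableSpace Ω] {μ : Measure Ω}
    {U : Ω → ℝ} (hU : Measurable U) {a r : ℝ} (ha : 0 < a) (hr : 0 < r)
    (hlaw : μ.map U = gammaMeasure a r) {t : ℝ} (ht : t < r) (c : ℝ) :
    μ {ω | c ≤ t * U ω} ≤ ENNReal.ofReal ((r / (r - t)) ^ a * exp (-c)) := by
  have hset : {ω | c ≤ t * U ω}
      = {ω | ENNReal.ofReal (exp c) ≤ ENNReal.ofReal (exp (t * U ω))} := by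
    ext ω
    simp only [Set.mem_ofPred_eq, ENNReal.ofReal_le_ofReal_iff (exp_pos _).le, exp_le_exp]
  have hmgf :
      ∫⁻ ω, ENNReal.ofReal (exp (t * U ω)) ∂μ = ENNReal.ofReal ((r / (r - t)) ^ a) := by
    rw [← lintegral_exp_mul_gammaMeasure ha hr ht, ← hlaw, lintegral_map (by fun_prop) hU]
  calc μ {ω | c ≤ t * U ω}
      ≤ (∫⁻ ω, ENNReal.ofReal (exp (t * U ω)) ∂μ) / ENNReal.ofReal (exp c) :=
        hset ▸ meas_ge_le_lintegral_div (by fun_prop)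
          (ENNReal.ofReal_pos.mpr (exp_pos c)).ne' ENNReal.ofReal_ne_top
    _ = ENNReal.ofReal ((r / (r - t)) ^ a * exp (-c)) := by
        rw [hmgf, ← ENNReal.ofReal_div_of_pos (exp_pos c), exp_neg, div_eq_mul_inv]

noncomputable abbrev chiSquaredMeasure (k : ℝ) : Measure ℝ := gammaMeasure (k / 2) (1 / 2)

section ChiSquared

variable {Ω : Type*} [MeasurableSpace Ω] {μ : Measure Ω} {U : Ω → ℝ} {k : ℝ}

lemma chiSquared_upper_tail (hU : Measurable U) (hk : 0 < k) (hlaw : μ.map U = chiSquaredMeasure k)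
    {u : ℝ} (hu : 0 ≤ u) :
    μ {ω | k * (1 + 2 * u + 2 * u ^ 2) ≤ U ω} ≤ ENNReal.ofReal (exp (-(k * u ^ 2))) := by
  set t := u / (1 + 2 * u) with ht_def
  have ht0 : 0 ≤ t := by positivity
  have ht : t < 1 / 2 := by
    rw [div_lt_iff₀ (by positivity)]
    linarith
  have hratio : 1 / 2 / (1 / 2 - t) = 1 + 2 * u := by
    rw [ht_def]
    field_simp
    ring
  calc μ {ω | k * (1 + 2 * u + 2 * u ^ 2) ≤ U ω}
      ≤ μ {ω | t * (k * (1 + 2 * u + 2 * u ^ 2)) ≤ t * U ω} :=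
        measure_mono fun ω hω => mul_le_mul_of_nonneg_left hω ht0
    _ ≤ ENNReal.ofReal ((1 / 2 / (1 / 2 - t)) ^ (k / 2)
          * exp (-(t * (k * (1 + 2 * u + 2 * u ^ 2))))) :=
        chernoff_bound_of_map_eq_gammaMeasure hU (by positivity) one_half_pos hlaw ht _
    _ ≤ ENNReal.ofReal (exp (-(k * u ^ 2))) := by
        refine ENNReal.ofReal_le_ofReal ?_
        rw [hratio, rpow_def_of_pos (by positivity), ← exp_add, exp_le_exp]
        have hlog := mul_le_mul_of_nonneg_right
          (log_le_sub_inv_div_two (w := 1 + 2 * u) (by linarith)) (by positivity : 0 ≤ k / 2)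
        have hid : (1 + 2 * u - (1 + 2 * u)⁻¹) / 2 * (k / 2) - t * (k * (1 + 2 * u + 2 * u ^ 2))
            = -(k * u ^ 2) := by
          rw [ht_def]
          field_simp
          ring
        linarith

lemma chiSquared_lower_tail (hU : Measurable U) (hk : 0 < k) (hlaw : μ.map U = chiSquaredMeasure k)
    {u : ℝ} (hu : 0 ≤ u) :
    μ {ω | U ω ≤ k * (1 - 2 * u)} ≤ ENNReal.ofReal (exp (-(k * u ^ 2))) := by
  have hratio : 1 / 2 / (1 / 2 - -u) = (1 + 2 * u)⁻¹ := by
    rw [sub_neg_eq_add]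
    field_simp
  calc μ {ω | U ω ≤ k * (1 - 2 * u)}
      ≤ μ {ω | -u * (k * (1 - 2 * u)) ≤ -u * U ω} :=
        measure_mono fun ω hω => mul_le_mul_of_nonpos_left hω (neg_nonpos.mpr hu)
    _ ≤ ENNReal.ofReal ((1 / 2 / (1 / 2 - -u)) ^ (k / 2) * exp (-(-u * (k * (1 - 2 * u))))) :=
        chernoff_bound_of_map_eq_gammaMeasure hU (by positivity) one_half_pos hlaw
          (by linarith) _
    _ ≤ ENNReal.ofReal (exp (-(k * u ^ 2))) := by
        refine ENNReal.ofReal_le_ofReal ?_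
        rw [hratio, inv_rpow (by positivity), rpow_def_of_pos (by positivity), ← exp_neg,
          ← exp_add, exp_le_exp]
        have hlog := mul_le_mul_of_nonneg_left
          (sub_sq_div_two_le_log_one_add (v := 2 * u) (by positivity)) hk.le
        nlinarith

end ChiSquared

theorem stmt7_general {Ω : Type*} [MeasurableSpace Ω] (μ : Measure Ω)
    (D : ℕ) (hD : 0 < D) (U : Ω → ℝ) (hU : Measurable U)
    (hlaw : Measure.map U μ = gammaMeasure ((D : ℝ) / 2) (1 / 2))
    (x : ℝ) (hx : 0 < x) :
    μ {ω | (D : ℝ) + 2 * Real.sqrt (D * x) + 2 * x ≤ U ω} ≤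
      ENNReal.ofReal (Real.exp (-x)) ∧
    μ {ω | U ω ≤ (D : ℝ) - 2 * Real.sqrt (D * x)} ≤
      ENNReal.ofReal (Real.exp (-x)) := by
  have hk : (0 : ℝ) < D := Nat.cast_pos.mpr hD
  obtain ⟨u, hu, rfl⟩ : ∃ u, 0 ≤ u ∧ x = D * u ^ 2 :=
    ⟨√(x / D), sqrt_nonneg _, by rw [sq_sqrt (by positivity)]; field_simp⟩
  have hsqrt : √(D * (D * u ^ 2)) = D * u := by
    rw [← sqrt_sq (by positivity : 0 ≤ (D : ℝ) * u)]
    ring_nf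
  rw [hsqrt]
  constructor
  · convert chiSquared_upper_tail hU hk hlaw hu using 5
    ring
  · convert chiSquared_lower_tail hU hk hlaw hu using 5
    ring

/-- Laurent–Massart: If `U` is a chi-square random variable with `D`
degrees of freedom (i.e. its law is `Gamma(D/2, rate 1/2)`), then for any `x > 0`,
`P(U ≥ D + 2√(Dx) + 2x) ≤ e^{−x}` and `P(U ≤ D − 2√(Dx)) ≤ e^{−x}`. -/
theorem stmt7 {Ω : Type*} [MeasurableSpace Ω] (μ : Measure Ω) [IsProbabilityMeasure μ]
    (D : ℕ) (hD : 0 < D) (U : Ω → ℝ) (hU : Measurable U)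
    (hlaw : Measure.map U μ = gammaMeasure ((D : ℝ) / 2) (1 / 2))
    (x : ℝ) (hx : 0 < x) :
    μ {ω | (D : ℝ) + 2 * Real.sqrt (D * x) + 2 * x ≤ U ω} ≤
      ENNReal.ofReal (Real.exp (-x)) ∧
    μ {ω | U ω ≤ (D : ℝ) - 2 * Real.sqrt (D * x)} ≤
      ENNReal.ofReal (Real.exp (-x)) :=
  stmt7_general μ D hD U hU hlaw x hx
end

section
/- Let h ~ Dir(α_1, …, α_K) with α_0 = Σ_k α_k, and conditionally on h, let z, z' be i.i.d. Multi(h), and given topics μ_1,…,μ_K ∈ ℝ^V (probability vectors), let x ~ Multi(μ_z), x' ~ Multi(μ_{z'}) be conditionally independent words (as basis vectors in ℝ^V). Then E[x ⊗ x'] − (α_0/(α_0+1)) E[x] ⊗ E[x'] = Σ_{k=1}^K (α_k / (α_0(α_0+1))) μ_k ⊗ μ_k. -/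
/-!
Write `h = y / S` with independent `y i ~ Gamma(α i, 1)` and `S = ∑ i, y i`. Since
`1 / S² = ∫₀^∞ t e^{-tS} dt`, independence reduces `E[h_j h_k] = E[y_j y_k / S²]` to
one-dimensional tilted gamma moments `E[y^c e^{-ty}] = Γ(a+c)/Γ(a) · (1+t)^{-(a+c)}`, giving
`E[h_j h_k] = (α_j α_k + δ_{jk} α_j) · J(α_0)` with `J` depending on `α_0` alone. The case of one
coordinate, where `h = 1`, forces `J(α_0) = 1/(α_0(α_0+1))`. Given `h` the two words are
independent, so `P(x = v, x' = w) = ∑_{j,k} μ_j(v) μ_k(w) E[h_j h_k]`, and the identity is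
algebra: the rank-one part `α αᵀ/(α_0(α_0+1))` of `E[h ⊗ h]` is `α_0/(α_0+1) · E[h] ⊗ E[h]`.
-/

open MeasureTheory ProbabilityTheory
open scoped ENNReal NNReal

/-- The Dirichlet distribution on `ℝ^K` with parameter `α`, realized as the law of
`(y_1/Σy, …, y_K/Σy)` where the `y_i` are independent `Gamma(α_i, 1)`. -/
noncomputable def dirichletMeasure {K : ℕ} (α : Fin K → ℝ) : Measure (Fin K → ℝ) :=
  Measure.map (fun y i => y i / ∑ j, y j) (Measure.pi fun i => gammaMeasure (α i) 1)

/-- The discrete (categorical/multinomial single-draw) measure on `Fin n` with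
probability vector `p`. -/
noncomputable def discreteMeasure {n : ℕ} (p : Fin n → ℝ) : Measure (Fin n) :=
  ∑ k, ENNReal.ofReal (p k) • Measure.dirac k

/-- Given topics `μs` and topic mixing `h`, the law of a single word:
draw a topic `z ~ Multi(h)`, then a word `x ~ Multi(μs z)`. -/
noncomputable def wordMeasure {K V : ℕ} (μs : Fin K → Fin V → ℝ) (h : Fin K → ℝ) :
    Measure (Fin V) :=
  (discreteMeasure h).bind fun k => discreteMeasure (μs k)

/-- The joint law of two words `(x, x')` in a document: draw `h ~ Dir(α)`, then two
conditionally i.i.d. words from `wordMeasure μs h`. -/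
noncomputable def wordPairMeasure {K V : ℕ} (α : Fin K → ℝ)
    (μs : Fin K → Fin V → ℝ) : Measure (Fin V × Fin V) :=
  (dirichletMeasure α).bind fun h => (wordMeasure μs h).prod (wordMeasure μs h)

open Real Set

lemma measurable_gammaPDF (a r : ℝ) : Measurable (gammaPDF a r) :=
  (measurable_gammaPDFReal a r).ennreal_ofReal

lemma ae_gammaMeasure_pos (a r : ℝ) : ∀ᵐ x ∂gammaMeasure a r, 0 < x := by
  rw [gammaMeasure, ae_withDensity_iff (measurable_gammaPDF a r)]
  filter_upwards [Measure.ae_ne volume 0] with x hx0 hpdf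
  by_contra hx
  exact hpdf (gammaPDF_of_neg (lt_of_le_of_ne (not_lt.mp hx) hx0))

-- Tilting a gamma density by `x ^ c * exp (-t x)` gives another gamma density.
lemma gammaPDF_mul_pow_mul_exp {a r t x : ℝ} (ha : 0 < a) (hr : 0 ≤ r) (hrt : 0 < r + t)
    (c : ℕ) (hx : x ≠ 0) :
    gammaPDF a r x * (ENNReal.ofReal x ^ c * ENNReal.ofReal (exp (-(t * x))))
      = ENNReal.ofReal (r ^ a * Gamma (a + c) / Gamma a / (r + t) ^ (a + c))
        * gammaPDF (a + c) (r + t) x := by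
  rcases hx.lt_or_gt with hx | hx
  · simp [gammaPDF_of_neg hx]
  have hΓ : 0 < Gamma (a + c) := Gamma_pos_of_pos (by positivity)
  rw [gammaPDF_of_nonneg hx.le, gammaPDF_of_nonneg hx.le, ← ENNReal.ofReal_pow hx.le,
    ← ENNReal.ofReal_mul (by positivity), ← ENNReal.ofReal_mul (by positivity),
    ← ENNReal.ofReal_mul (by have := Gamma_pos_of_pos ha; positivity)]
  congr 1
  rw [show a + c - 1 = (a - 1) + c by ring, rpow_add hx, rpow_natCast,
    show -((r + t) * x) = -(r * x) + -(t * x) by ring, exp_add]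
  field_simp

lemma lintegral_pow_mul_exp_gammaMeasure {a r t : ℝ} (ha : 0 < a) (hr : 0 ≤ r)
    (hrt : 0 < r + t) (c : ℕ) :
    ∫⁻ x, ENNReal.ofReal x ^ c * ENNReal.ofReal (exp (-(t * x))) ∂gammaMeasure a r
      = ENNReal.ofReal (r ^ a * Gamma (a + c) / Gamma a / (r + t) ^ (a + c)) := by
  rw [gammaMeasure, lintegral_withDensity_eq_lintegral_mul _
    (measurable_gammaPDF a r) (by fun_prop)]
  simp only [Pi.mul_apply]
  rw [lintegral_congr_ae ((Measure.ae_ne volume 0).mono fun x hx =>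
      gammaPDF_mul_pow_mul_exp ha hr hrt c hx),
    lintegral_const_mul _ (measurable_gammaPDF _ _),
    lintegral_gammaPDF_eq_one (by positivity) hrt, mul_one]

lemma gammaMeasure_Ioi_zero_eq_one {a r : ℝ} (ha : 0 < a) (hr : 0 < r) :
    gammaMeasure a r (Ioi 0) = 1 := by
  have := isProbabilityMeasure_gammaMeasure ha hr
  exact prob_compl_eq_zero_iff measurableSet_Ioi |>.mp (ae_gammaMeasure_pos a r)

lemma lintegral_Ioi_pow_mul_exp_neg_mul {S : ℝ} (hS : 0 < S) (n : ℕ) :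
    ∫⁻ t in Ioi 0, ENNReal.ofReal (t ^ n * exp (-(S * t)))
      = ENNReal.ofReal (n.factorial / S ^ (n + 1)) := by
  have hpdf : ∀ t ∈ Ioi (0 : ℝ), ENNReal.ofReal (t ^ n * exp (-(S * t)))
      = ENNReal.ofReal (n.factorial / S ^ (n + 1)) * gammaPDF (n + 1) S t := by
    intro t ht
    rw [gammaPDF_of_nonneg (le_of_lt ht), ← ENNReal.ofReal_mul (by positivity)]
    congr 1
    rw [add_sub_cancel_right, rpow_natCast, Gamma_nat_eq_factorial, ← Nat.cast_add_one,
      rpow_natCast]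
    field_simp
  rw [setLIntegral_congr_fun measurableSet_Ioi hpdf, lintegral_const_mul _
    (measurable_gammaPDF _ _), ← withDensity_apply _ measurableSet_Ioi,
    ← gammaMeasure, gammaMeasure_Ioi_zero_eq_one (by positivity) hS, mul_one]

lemma Fintype.prod_apply_single_add_single {ι M : Type*} [Fintype ι] [DecidableEq ι]
    [CommMonoid M] (g : ι → ℕ → M) (hg : ∀ i, g i 0 = 1) (j k : ι) :
    ∏ i, g i ((Pi.single j 1 + Pi.single k 1 : ι → ℕ) i)
      = if j = k then g j 2 else g j 1 * g k 1 := by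
  split_ifs with hjk
  · subst hjk
    rw [Fintype.prod_eq_single j fun i hi => by simp [hi, hg]]
    simp
  · rw [Fintype.prod_eq_mul j k hjk fun i hi => by simp [hi.1, hi.2, hg]]
    simp [hjk, Ne.symm hjk]

section GammaProduct

variable {ι : Type*} [Fintype ι] {α : ι → ℝ}

lemma ae_pi_gammaMeasure_pos (hα : ∀ i, 0 < α i) {r : ℝ} (hr : 0 < r) :
    ∀ᵐ y ∂Measure.pi (fun i => gammaMeasure (α i) r), ∀ i, 0 < y i := by
  have := fun i => isProbabilityMeasure_gammaMeasure (hα i) hr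
  exact ae_all_iff.2 fun i =>
    (Measure.quasiMeasurePreserving_eval _ i).ae (ae_gammaMeasure_pos (α i) r)

lemma lintegral_pi_gammaMeasure_prod_pow_mul_exp (hα : ∀ i, 0 < α i) {r t : ℝ} (hr : 0 < r)
    (hrt : 0 < r + t) (c : ι → ℕ) :
    ∫⁻ y, ∏ i, ENNReal.ofReal (y i) ^ c i * ENNReal.ofReal (exp (-(t * y i)))
        ∂Measure.pi (fun i => gammaMeasure (α i) r)
      = ∏ i, ENNReal.ofReal
          (r ^ α i * Gamma (α i + c i) / Gamma (α i) / (r + t) ^ (α i + c i)) := by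
  have := fun i => isProbabilityMeasure_gammaMeasure (hα i) hr
  have hind : iIndepFun (fun i (y : ι → ℝ) => ENNReal.ofReal (y i) ^ c i
      * ENNReal.ofReal (exp (-(t * y i)))) (Measure.pi fun i => gammaMeasure (α i) r) :=
    iIndepFun_pi (X := fun i x => ENNReal.ofReal x ^ c i * ENNReal.ofReal (exp (-(t * x))))
      fun i => by fun_prop
  rw [lintegral_prod_eq_prod_lintegral_of_indepFun _ _ hind fun i => by fun_prop]
  exact Finset.prod_congr rfl fun i _ =>
    ((measurePreserving_eval (fun i => gammaMeasure (α i) r) i).lintegral_comp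
      (by fun_prop)).trans (lintegral_pow_mul_exp_gammaMeasure (hα i) hr.le hrt (c i))

lemma prod_Gamma_add_single_add_single_div [DecidableEq ι] (hα : ∀ i, 0 < α i) (j k : ι) :
    ∏ i, Gamma (α i + ((Pi.single j 1 + Pi.single k 1 : ι → ℕ) i)) / Gamma (α i)
      = α j * α k + if j = k then α j else 0 := by
  have hΓ : ∀ i, Gamma (α i) ≠ 0 := fun i => (Gamma_pos_of_pos (hα i)).ne'
  rw [Fintype.prod_apply_single_add_single (fun i n => Gamma (α i + n) / Gamma (α i))
    fun i => by simp [hΓ i]]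
  split_ifs with hjk
  · subst hjk
    rw [Nat.cast_ofNat, show α j + 2 = α j + 1 + 1 by ring,
      Gamma_add_one (by linarith [hα j]), Gamma_add_one (hα j).ne']
    field_simp [hΓ j]
  · simp only [Nat.cast_one, Gamma_add_one (hα _).ne', add_zero]
    field_simp [hΓ j, hΓ k]

lemma prod_one_add_rpow_add_single_add_single [DecidableEq ι] {t : ℝ} (ht : 0 < 1 + t)
    (j k : ι) :
    ∏ i, (1 + t) ^ (α i + ((Pi.single j 1 + Pi.single k 1 : ι → ℕ) i))
      = (1 + t) ^ (∑ i, α i + 2) := by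
  simp only [← rpow_sum_of_pos ht, Finset.sum_add_distrib, ← Nat.cast_sum, Pi.add_apply,
    Finset.sum_pi_single', Finset.mem_univ, if_true]
  norm_num

lemma lintegral_pi_gammaMeasure_div_sum_mul_div_sum [DecidableEq ι] (hα : ∀ i, 0 < α i)
    (j k : ι) :
    ∫⁻ y, ENNReal.ofReal (y j / ∑ i, y i) * ENNReal.ofReal (y k / ∑ i, y i)
        ∂Measure.pi (fun i => gammaMeasure (α i) 1)
      = ENNReal.ofReal (α j * α k + if j = k then α j else 0)
        * ∫⁻ t in Ioi 0, ENNReal.ofReal (t / (1 + t) ^ (∑ i, α i + 2)) := by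
  have := fun i => isProbabilityMeasure_gammaMeasure (hα i) one_pos
  set c : ι → ℕ := Pi.single j 1 + Pi.single k 1
  have hlaplace : ∀ᵐ y ∂Measure.pi (fun i => gammaMeasure (α i) 1),
      ENNReal.ofReal (y j / ∑ i, y i) * ENNReal.ofReal (y k / ∑ i, y i)
        = ∫⁻ t in Ioi 0, ENNReal.ofReal t
            * ∏ i, ENNReal.ofReal (y i) ^ c i * ENNReal.ofReal (exp (-(t * y i))) := by
    filter_upwards [ae_pi_gammaMeasure_pos hα one_pos] with y hy
    have hS : 0 < ∑ i, y i := Finset.sum_pos (fun i _ => hy i) ⟨j, Finset.mem_univ j⟩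
    have hprod : ∀ t, ENNReal.ofReal t
        * ∏ i, ENNReal.ofReal (y i) ^ c i * ENNReal.ofReal (exp (-(t * y i)))
          = ENNReal.ofReal (y j * y k) * ENNReal.ofReal (t ^ 1 * exp (-((∑ i, y i) * t))) := by
      intro t
      rw [Finset.prod_mul_distrib, Fintype.prod_apply_single_add_single
        (fun i n => ENNReal.ofReal (y i) ^ n) fun _ => pow_zero _,
        ← ENNReal.ofReal_prod_of_nonneg fun _ _ => (exp_pos _).le, ← exp_sum,
        ENNReal.ofReal_mul (hy j).le, ENNReal.ofReal_mul' (exp_pos _).le,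
        Finset.sum_neg_distrib, ← Finset.mul_sum, mul_comm t]
      simp only [pow_one]
      split_ifs with hjk
      · subst hjk
        ring
      · ring
    simp_rw [hprod]
    rw [lintegral_const_mul' _ _ ENNReal.ofReal_ne_top, lintegral_Ioi_pow_mul_exp_neg_mul hS,
      ← ENNReal.ofReal_mul (mul_nonneg (hy j).le (hy k).le),
      ← ENNReal.ofReal_mul (div_nonneg (hy j).le hS.le)]
    congr 1
    field_simp
    ring
  rw [lintegral_congr_ae hlaplace, lintegral_lintegral_swap (by fun_prop),
    ← lintegral_const_mul _ (by fun_prop)]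
  refine setLIntegral_congr_fun measurableSet_Ioi fun t (ht : 0 < t) => ?_
  rw [lintegral_const_mul' _ _ ENNReal.ofReal_ne_top,
    lintegral_pi_gammaMeasure_prod_pow_mul_exp hα one_pos (by linarith) c,
    ← ENNReal.ofReal_prod_of_nonneg fun i _ => ?_, ← ENNReal.ofReal_mul ht.le,
    ← ENNReal.ofReal_mul' (by positivity)]
  · congr 1
    simp only [one_rpow, one_mul]
    rw [Finset.prod_div_distrib, prod_Gamma_add_single_add_single_div hα,
      prod_one_add_rpow_add_single_add_single (by linarith)]
    ring
  · have := Gamma_pos_of_pos (hα i)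
    have := Gamma_pos_of_pos (add_pos_of_pos_of_nonneg (hα i) (c i).cast_nonneg)
    positivity

end GammaProduct

-- For a single coordinate `y / ∑ y = 1`, so the left side of
-- `lintegral_pi_gammaMeasure_div_sum_mul_div_sum` is `1`: no calculus is needed.
lemma lintegral_Ioi_div_one_add_rpow {s : ℝ} (hs : 0 < s) :
    ∫⁻ t in Ioi 0, ENNReal.ofReal (t / (1 + t) ^ (s + 2))
      = ENNReal.ofReal (1 / (s * (s + 1))) := by
  have := isProbabilityMeasure_gammaMeasure hs one_pos
  have h := lintegral_pi_gammaMeasure_div_sum_mul_div_sum (α := fun _ : Unit => s)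
    (fun _ => hs) () ()
  have hone : ∀ᵐ y ∂Measure.pi (fun _ : Unit => gammaMeasure s 1),
      ENNReal.ofReal (y () / ∑ i, y i) * ENNReal.ofReal (y () / ∑ i, y i) = 1 := by
    filter_upwards [ae_pi_gammaMeasure_pos (fun _ => hs) one_pos] with y hy
    simp [(hy ()).ne']
  rw [lintegral_congr_ae hone, lintegral_one, measure_univ] at h
  simp only [Finset.univ_unique, Finset.sum_singleton, if_true] at h
  rw [ENNReal.eq_inv_of_mul_eq_one_left ((mul_comm _ _).trans h.symm),
    ← ENNReal.ofReal_inv_of_pos (by positivity)]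
  congr 1
  ring

section Dirichlet

variable {K : ℕ} {α : Fin K → ℝ}

noncomputable def dirichletSecondMoment (α : Fin K → ℝ) (j k : Fin K) : ℝ :=
  (α j * α k + if j = k then α j else 0) / ((∑ i, α i) * (∑ i, α i + 1))

lemma dirichletSecondMoment_nonneg (hα : ∀ i, 0 < α i) (j k : Fin K) :
    0 ≤ dirichletSecondMoment α j k := by
  have := hα j
  have := hα k
  have := Finset.sum_nonneg fun i (_ : i ∈ Finset.univ) => (hα i).le
  unfold dirichletSecondMoment
  split_ifs <;> positivity

lemma lintegral_dirichletMeasure_mul (hα : ∀ i, 0 < α i) (j k : Fin K) :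
    ∫⁻ h, ENNReal.ofReal (h j) * ENNReal.ofReal (h k) ∂dirichletMeasure α
      = ENNReal.ofReal (dirichletSecondMoment α j k) := by
  have hα₀ : 0 < ∑ i, α i := Finset.sum_pos (fun i _ => hα i) ⟨j, Finset.mem_univ j⟩
  rw [dirichletMeasure, lintegral_map (by fun_prop) (by fun_prop),
    lintegral_pi_gammaMeasure_div_sum_mul_div_sum hα, lintegral_Ioi_div_one_add_rpow hα₀,
    ← ENNReal.ofReal_mul' (by positivity), dirichletSecondMoment, mul_one_div]

lemma sum_dirichletSecondMoment_right (hα : ∀ i, 0 < α i) (j : Fin K) :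
    ∑ k, dirichletSecondMoment α j k = α j / ∑ i, α i := by
  have hα₀ : 0 < ∑ i, α i := Finset.sum_pos (fun i _ => hα i) ⟨j, Finset.mem_univ j⟩
  simp only [dirichletSecondMoment, ← Finset.sum_div, Finset.sum_add_distrib, ← Finset.mul_sum,
    Finset.sum_ite_eq, Finset.mem_univ, if_true]
  field_simp

lemma sum_dirichletSecondMoment_left (hα : ∀ i, 0 < α i) (k : Fin K) :
    ∑ j, dirichletSecondMoment α j k = α k / ∑ i, α i := by
  have hα₀ : 0 < ∑ i, α i := Finset.sum_pos (fun i _ => hα i) ⟨k, Finset.mem_univ k⟩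
  simp only [dirichletSecondMoment, ← Finset.sum_div, Finset.sum_add_distrib, ← Finset.sum_mul,
    Finset.sum_ite_eq', Finset.mem_univ, if_true]
  field_simp

lemma sum_mul_dirichletSecondMoment_sub (hα : ∀ i, 0 < α i) (x y : Fin K → ℝ) :
    ∑ j, ∑ k, x j * y k * dirichletSecondMoment α j k
        - (∑ i, α i) / (∑ i, α i + 1)
          * ((∑ j, x j * (α j / ∑ i, α i)) * (∑ k, y k * (α k / ∑ i, α i)))
      = ∑ k, α k / ((∑ i, α i) * (∑ i, α i + 1)) * (x k * y k) := by
  set s := ∑ i, α i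
  have hs : 0 ≤ s := Finset.sum_nonneg fun i _ => (hα i).le
  have hrank_one : ∑ j, ∑ k, x j * y k * (α j * α k / (s * (s + 1)))
      = s / (s + 1) * ((∑ j, x j * (α j / s)) * (∑ k, y k * (α k / s))) := by
    rcases hs.eq_or_lt with h0 | hpos
    · simp [← h0]
    rw [Finset.sum_mul_sum, Finset.mul_sum]
    refine Finset.sum_congr rfl fun j _ => ?_
    rw [Finset.mul_sum]
    refine Finset.sum_congr rfl fun k _ => ?_
    field_simp
  set D := s * (s + 1)
  have hm : ∀ j k, dirichletSecondMoment α j k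
      = α j * α k / D + if j = k then α j / D else 0 := by
    intro j k
    rw [dirichletSecondMoment, add_div, ite_div, zero_div]
  simp_rw [hm, mul_add, Finset.sum_add_distrib]
  rw [hrank_one, add_sub_cancel_left]
  simp only [mul_ite, mul_zero, Finset.sum_ite_eq, Finset.mem_univ, if_true]
  refine Finset.sum_congr rfl fun k _ => ?_
  ring

end Dirichlet

section Words

variable {K V : ℕ} {α : Fin K → ℝ} {μs : Fin K → Fin V → ℝ}

lemma discreteMeasure_singleton {n : ℕ} (p : Fin n → ℝ) (k : Fin n) :
    discreteMeasure p {k} = ENNReal.ofReal (p k) := by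
  simp [discreteMeasure, Measure.dirac_apply', Set.indicator_apply]

lemma wordMeasure_singleton (μs : Fin K → Fin V → ℝ) (h : Fin K → ℝ) (v : Fin V) :
    wordMeasure μs h {v} = ∑ k, ENNReal.ofReal (h k) * ENNReal.ofReal (μs k v) := by
  rw [wordMeasure, Measure.bind_apply (measurableSet_singleton v)
    (measurable_of_countable _).aemeasurable, lintegral_fintype]
  simp [discreteMeasure_singleton, mul_comm]

lemma measurable_wordMeasure_prod (μs : Fin K → Fin V → ℝ) :
    Measurable fun h : Fin K → ℝ => (wordMeasure μs h).prod (wordMeasure μs h) := by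
  classical
  refine Measure.measurable_of_measurable_coe _ fun s _ => ?_
  have hs : s = ↑(Finset.univ.filter (· ∈ s)) := by ext; simp
  have hp : ∀ p : Fin V × Fin V, ({p} : Set _) = {p.1} ×ˢ {p.2} := fun p => by simp
  rw [hs]
  simp_rw [← sum_measure_singleton, hp, Measure.prod_prod, wordMeasure_singleton]
  fun_prop

lemma wordPairMeasure_singleton (hα : ∀ i, 0 < α i) (hμpos : ∀ k v, 0 ≤ μs k v)
    (v w : Fin V) :
    wordPairMeasure α μs {(v, w)}
      = ENNReal.ofReal (∑ j, ∑ k, μs j v * μs k w * dirichletSecondMoment α j k) := by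
  have hterm : ∀ (h : Fin K → ℝ) j k, ENNReal.ofReal (h j) * ENNReal.ofReal (μs j v)
      * (ENNReal.ofReal (h k) * ENNReal.ofReal (μs k w))
        = ENNReal.ofReal (μs j v * μs k w) * (ENNReal.ofReal (h j) * ENNReal.ofReal (h k)) := by
    intro h j k
    rw [ENNReal.ofReal_mul (hμpos j v)]
    ring
  rw [wordPairMeasure, Measure.bind_apply (measurableSet_singleton _)
    (measurable_wordMeasure_prod μs).aemeasurable]
  simp_rw [← Set.singleton_prod_singleton, Measure.prod_prod, wordMeasure_singleton,
    Finset.sum_mul_sum, hterm]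
  have hm : ∀ j k, 0 ≤ μs j v * μs k w * dirichletSecondMoment α j k := fun j k =>
    mul_nonneg (mul_nonneg (hμpos j v) (hμpos k w)) (dirichletSecondMoment_nonneg hα j k)
  rw [ENNReal.ofReal_sum_of_nonneg fun j _ => Finset.sum_nonneg fun k _ => hm j k,
    lintegral_finsetSum _ fun j _ => by fun_prop]
  refine Finset.sum_congr rfl fun j _ => ?_
  rw [ENNReal.ofReal_sum_of_nonneg fun k _ => hm j k,
    lintegral_finsetSum _ fun k _ => by fun_prop]
  refine Finset.sum_congr rfl fun k _ => ?_
  rw [lintegral_const_mul _ (by fun_prop), lintegral_dirichletMeasure_mul hα,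
    ← ENNReal.ofReal_mul (mul_nonneg (hμpos j v) (hμpos k w))]

lemma integral_wordPairMeasure (hα : ∀ i, 0 < α i) (hμpos : ∀ k v, 0 ≤ μs k v)
    (F : Fin V × Fin V → ℝ) :
    ∫ p, F p ∂wordPairMeasure α μs
      = ∑ v, ∑ w,
          (∑ j, ∑ k, μs j v * μs k w * dirichletSecondMoment α j k) * F (v, w) := by
  have : IsFiniteMeasure (wordPairMeasure α μs) := by
    refine ⟨?_⟩
    rw [← Finset.coe_univ, ← sum_measure_singleton]
    exact ENNReal.sum_lt_top.2 fun p _ => by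
      rw [wordPairMeasure_singleton hα hμpos p.1 p.2]
      exact ENNReal.ofReal_lt_top
  rw [integral_fintype Integrable.of_finite, Fintype.sum_prod_type]
  refine Finset.sum_congr rfl fun v _ => Finset.sum_congr rfl fun w _ => ?_
  rw [measureReal_def, wordPairMeasure_singleton hα hμpos, ENNReal.toReal_ofReal
    (Finset.sum_nonneg fun j _ => Finset.sum_nonneg fun k _ => mul_nonneg
      (mul_nonneg (hμpos j v) (hμpos k w)) (dirichletSecondMoment_nonneg hα j k)), smul_eq_mul]

lemma integral_single_mul_single_wordPairMeasure (hα : ∀ i, 0 < α i)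
    (hμpos : ∀ k v, 0 ≤ μs k v) (a b : Fin V) :
    ∫ p : Fin V × Fin V, (Pi.single p.1 1 : Fin V → ℝ) a * (Pi.single p.2 1 : Fin V → ℝ) b
        ∂wordPairMeasure α μs
      = ∑ j, ∑ k, μs j a * μs k b * dirichletSecondMoment α j k := by
  simp [integral_wordPairMeasure hα hμpos, Pi.single_apply]

lemma integral_single_fst_wordPairMeasure (hα : ∀ i, 0 < α i) (hμpos : ∀ k v, 0 ≤ μs k v)
    (hμsum : ∀ k, ∑ v, μs k v = 1) (a : Fin V) :
    ∫ p : Fin V × Fin V, (Pi.single p.1 1 : Fin V → ℝ) a ∂wordPairMeasure α μs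
      = ∑ j, μs j a * (α j / ∑ i, α i) := by
  simp only [integral_wordPairMeasure hα hμpos, Pi.single_apply, mul_ite, mul_one, mul_zero]
  rw [Finset.sum_comm]
  simp only [Finset.sum_ite_eq, Finset.mem_univ, if_true]
  simp_rw [← sum_dirichletSecondMoment_right hα, Finset.mul_sum]
  rw [Finset.sum_comm]
  refine Finset.sum_congr rfl fun j _ => ?_
  rw [Finset.sum_comm]
  refine Finset.sum_congr rfl fun k _ => ?_
  rw [← Finset.sum_mul, ← Finset.mul_sum, hμsum, mul_one]

lemma integral_single_snd_wordPairMeasure (hα : ∀ i, 0 < α i) (hμpos : ∀ k v, 0 ≤ μs k v)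
    (hμsum : ∀ k, ∑ v, μs k v = 1) (b : Fin V) :
    ∫ p : Fin V × Fin V, (Pi.single p.2 1 : Fin V → ℝ) b ∂wordPairMeasure α μs
      = ∑ k, μs k b * (α k / ∑ i, α i) := by
  simp only [integral_wordPairMeasure hα hμpos, Pi.single_apply, mul_ite, mul_one, mul_zero,
    Finset.sum_ite_eq, Finset.mem_univ, if_true]
  simp_rw [← sum_dirichletSecondMoment_left hα, Finset.mul_sum]
  rw [Finset.sum_comm]
  conv_rhs => rw [Finset.sum_comm]
  refine Finset.sum_congr rfl fun j _ => ?_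
  rw [Finset.sum_comm]
  refine Finset.sum_congr rfl fun k _ => ?_
  rw [← Finset.sum_mul, ← Finset.sum_mul, hμsum, one_mul]

end Words

/-- STATEMENT 16 (LDA second-order moment identity), stated entrywise: with the words
represented as standard basis vectors `e_v = Pi.single v 1` of `ℝ^V`,
`E[x ⊗ x'] − (α_0/(α_0+1)) E[x] ⊗ E[x'] = Σ_k (α_k/(α_0(α_0+1))) μ_k ⊗ μ_k`. -/
theorem stmt16 {K V : ℕ} (α : Fin K → ℝ) (hα : ∀ k, 0 < α k)
    (μs : Fin K → Fin V → ℝ) (hμpos : ∀ k v, 0 ≤ μs k v)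
    (hμsum : ∀ k, ∑ v, μs k v = 1) :
    ∀ a b : Fin V,
      (∫ p : Fin V × Fin V, (Pi.single p.1 1 : Fin V → ℝ) a * (Pi.single p.2 1 : Fin V → ℝ) b
          ∂(wordPairMeasure α μs)) -
        ((∑ i, α i) / ((∑ i, α i) + 1)) *
          ((∫ p : Fin V × Fin V, (Pi.single p.1 1 : Fin V → ℝ) a ∂(wordPairMeasure α μs)) *
           (∫ p : Fin V × Fin V, (Pi.single p.2 1 : Fin V → ℝ) b ∂(wordPairMeasure α μs))) =
      ∑ k, (α k / ((∑ i, α i) * ((∑ i, α i) + 1))) * (μs k a * μs k b) := by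
  intro a b
  rw [integral_single_mul_single_wordPairMeasure hα hμpos,
    integral_single_fst_wordPairMeasure hα hμpos hμsum,
    integral_single_snd_wordPairMeasure hα hμpos hμsum]
  exact sum_mul_dirichletSecondMoment_sub hα _ _
end
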